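/- arXiv:1704.02958 — 7 statements merged into one kernel-verified Lean document; each statement's English description precedes it below -/
import Mathlib

section
/- Let n ≥ 2 and let a_1,…,a_n ∈ {0,1}^d be pairwise distinct. Suppose α* ∈ ℝ^n with α*_i ≥ 0 is feasible (i.e., Σ_{j=1}^n α*_j k(a_i,a_j) ≥ 1 for all i) and attains the minimum value val(A) of the SVM problem. Then for every i ∈ {1,…,n} it holds that 1/2 ≤ α*_i ≤ n. -/
open Finset

/-- The Gaussian kernel with parameter `C = 100 ln n`. -/
noncomputable def gaussK (n d : ℕ) (x y : Fin d → ℝ) : ℝ :=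
  Real.exp (-(100 * Real.log n) * ∑ l, (x l - y l) ^ 2)

/-- `val(A)`: the optimal value of the hard-margin SVM (without bias) on the
points `a_1, …, a_n`, all with label `+1`. -/
noncomputable def svmVal (n d : ℕ) (a : Fin n → Fin d → ℝ) : ℝ :=
  sInf {v : ℝ | ∃ α : Fin n → ℝ, (∀ i, 0 ≤ α i) ∧
    (∀ i, 1 ≤ ∑ j, α j * gaussK n d (a i) (a j)) ∧
    v = (1 / 2) * ∑ i, ∑ j, α i * α j * gaussK n d (a i) (a j)}

/-!
On pairwise distinct binary points every off-diagonal kernel value is at most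
`exp(-C) = n⁻¹⁰⁰`, while the diagonal is `1`, so the kernel matrix is nearly the identity.
Comparing the optimum with the feasible point `α = 1` gives `α*_i² ≤ α*ᵀKα* ≤ 1ᵀK1 ≤ n²`,
hence `α*_i ≤ n`; feeding this back into the `i`-th margin constraint gives
`1 ≤ α*_i + (n - 1) · n · n⁻¹⁰⁰ ≤ α*_i + 1/2`.
-/

section KernelMatrix

variable {ι : Type*} [Fintype ι] (K : ι → ι → ℝ)

theorem sq_le_sum_sum_mul_mul (hK : ∀ i j, 0 ≤ K i j) (hdiag : ∀ i, K i i = 1)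
    {α : ι → ℝ} (hα : ∀ i, 0 ≤ α i) (i : ι) :
    α i ^ 2 ≤ ∑ i, ∑ j, α i * α j * K i j := by
  have hterm : ∀ i j, 0 ≤ α i * α j * K i j :=
    fun i j => mul_nonneg (mul_nonneg (hα i) (hα j)) (hK i j)
  calc α i ^ 2 = α i * α i * K i i := by rw [hdiag, mul_one, sq]
    _ ≤ ∑ j, α i * α j * K i j :=
      single_le_sum (f := fun j => α i * α j * K i j) (fun j _ => hterm i j) (mem_univ i)
    _ ≤ ∑ i, ∑ j, α i * α j * K i j :=
      single_le_sum (f := fun i => ∑ j, α i * α j * K i j)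
        (fun i _ => sum_nonneg fun j _ => hterm i j) (mem_univ i)

theorem sum_sum_le_card_sq (hK : ∀ i j, K i j ≤ 1) :
    ∑ i, ∑ j, K i j ≤ (Fintype.card ι : ℝ) ^ 2 := by
  calc ∑ i, ∑ j, K i j ≤ ∑ _i : ι, ∑ _j : ι, (1 : ℝ) :=
        sum_le_sum fun i _ => sum_le_sum fun j _ => hK i j
    _ = (Fintype.card ι : ℝ) ^ 2 := by simp [sq]

theorem one_le_add_of_one_le_sum_mul (hK : ∀ i j, 0 ≤ K i j) (hdiag : ∀ i, K i i = 1)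
    {α : ι → ℝ} (hα : ∀ i, 0 ≤ α i) {M ε : ℝ} (hM : ∀ j, α j ≤ M)
    (hoff : ∀ i j, i ≠ j → K i j ≤ ε) (i : ι) (h : 1 ≤ ∑ j, α j * K i j) :
    1 ≤ α i + (Fintype.card ι - 1) * (M * ε) := by
  classical
  have htail : ∑ j ∈ univ.erase i, α j * K i j ≤ ∑ _j ∈ univ.erase i, M * ε :=
    sum_le_sum fun j hj =>
      mul_le_mul (hM j) (hoff i j (ne_of_mem_erase hj).symm) (hK i j) ((hα j).trans (hM j))
  have hcard : ((univ.erase i).card : ℝ) = Fintype.card ι - 1 := by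
    rw [card_erase_of_mem (mem_univ i), card_univ,
      Nat.cast_sub (Fintype.card_pos_iff.mpr ⟨i⟩), Nat.cast_one]
  rw [← add_sum_erase _ _ (mem_univ i), hdiag, mul_one] at h
  rw [sum_const, nsmul_eq_mul, hcard] at htail
  linarith

end KernelMatrix

theorem one_le_sum_sq_sub_of_ne {κ : Type*} [Fintype κ] {x y : κ → ℝ}
    (hx : ∀ l, x l = 0 ∨ x l = 1) (hy : ∀ l, y l = 0 ∨ y l = 1) (hxy : x ≠ y) :
    1 ≤ ∑ l, (x l - y l) ^ 2 := by
  obtain ⟨l, hl⟩ := Function.ne_iff.mp hxy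
  have hdiff : (x l - y l) ^ 2 = 1 := by
    rcases hx l with h | h <;> rcases hy l with h' | h' <;> simp_all
  calc (1 : ℝ) = (x l - y l) ^ 2 := hdiff.symm
    _ ≤ ∑ l, (x l - y l) ^ 2 :=
      single_le_sum (f := fun l => (x l - y l) ^ 2) (fun _ _ => sq_nonneg _) (mem_univ l)

section GaussianKernel

variable (n d : ℕ)

theorem gaussK_self (x : Fin d → ℝ) : gaussK n d x x = 1 := by
  simp [gaussK]

theorem gaussK_pos (x y : Fin d → ℝ) : 0 < gaussK n d x y :=
  Real.exp_pos _

theorem gaussK_le_one (x y : Fin d → ℝ) : gaussK n d x y ≤ 1 :=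
  Real.exp_le_one_iff.mpr <| mul_nonpos_of_nonpos_of_nonneg
    (neg_nonpos.mpr (mul_nonneg (by norm_num) (Real.log_natCast_nonneg n)))
    (sum_nonneg fun _ _ => sq_nonneg _)

variable {n d}

theorem gaussK_le_inv_pow_of_one_le (hn : 0 < n) {x y : Fin d → ℝ}
    (hxy : 1 ≤ ∑ l, (x l - y l) ^ 2) :
    gaussK n d x y ≤ ((n : ℝ) ^ 100)⁻¹ := by
  have hlog : 0 ≤ Real.log n := Real.log_natCast_nonneg n
  have hexp : Real.exp (-(100 * Real.log n)) = ((n : ℝ) ^ 100)⁻¹ := by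
    rw [Real.exp_neg, show (100 : ℝ) = ((100 : ℕ) : ℝ) by norm_num, ← Real.log_pow,
      Real.exp_log (by positivity)]
  rw [← hexp]
  exact Real.exp_le_exp.mpr (by nlinarith)

theorem svmVal_le {a : Fin n → Fin d → ℝ} {β : Fin n → ℝ} (hβ : ∀ i, 0 ≤ β i)
    (hfeas : ∀ i, 1 ≤ ∑ j, β j * gaussK n d (a i) (a j)) :
    svmVal n d a ≤ (1 / 2) * ∑ i, ∑ j, β i * β j * gaussK n d (a i) (a j) := by
  refine csInf_le ⟨0, ?_⟩ ⟨β, hβ, hfeas, rfl⟩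
  rintro v ⟨γ, hγ, -, rfl⟩
  exact mul_nonneg (by norm_num) <| sum_nonneg fun i _ => sum_nonneg fun j _ =>
    mul_nonneg (mul_nonneg (hγ i) (hγ j)) (gaussK_pos n d _ _).le

theorem svmVal_le_sq_div_two (a : Fin n → Fin d → ℝ) : svmVal n d a ≤ (n : ℝ) ^ 2 / 2 := by
  have hones : ∀ i, 1 ≤ ∑ j, (1 : ℝ) * gaussK n d (a i) (a j) := fun i =>
    calc (1 : ℝ) = 1 * gaussK n d (a i) (a i) := by rw [gaussK_self, one_mul]
      _ ≤ ∑ j, (1 : ℝ) * gaussK n d (a i) (a j) :=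
        single_le_sum (f := fun j => 1 * gaussK n d (a i) (a j))
          (fun j _ => by rw [one_mul]; exact (gaussK_pos n d _ _).le) (mem_univ i)
  have hsum := sum_sum_le_card_sq (fun i j => gaussK n d (a i) (a j))
    (fun _ _ => gaussK_le_one n d _ _)
  have hval := svmVal_le (fun _ => zero_le_one) hones
  simp only [one_mul, Fintype.card_fin] at hsum hval
  linarith

end GaussianKernel

theorem sub_one_mul_mul_inv_pow_le_half {x : ℝ} (hx : 2 ≤ x) :
    (x - 1) * (x * (x ^ 100)⁻¹) ≤ 1 / 2 := by
  have hx0 : 0 < x := by linarith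
  have hpow : 2 * x ^ 2 ≤ x ^ 100 := by
    have : (2 : ℝ) ≤ x ^ 98 := le_trans (by norm_num) (pow_le_pow_left₀ (by norm_num) hx 98)
    nlinarith [pow_pos hx0 2, show x ^ 100 = x ^ 2 * x ^ 98 by ring]
  rw [← mul_assoc, ← div_eq_mul_inv, div_le_iff₀ (by positivity)]
  nlinarith

/-- Any feasible minimizer `α*` of the SVM problem on pairwise distinct binary
vectors satisfies `1/2 ≤ α*_i ≤ n` for every `i`. -/
theorem svm_minimizer_bounded (n d : ℕ) (hn : 2 ≤ n)
    (a : Fin n → Fin d → ℝ)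
    (ha01 : ∀ i l, a i l = 0 ∨ a i l = 1)
    (hainj : Function.Injective a)
    (αs : Fin n → ℝ) (hpos : ∀ i, 0 ≤ αs i)
    (hfeas : ∀ i, 1 ≤ ∑ j, αs j * gaussK n d (a i) (a j))
    (hopt : (1 / 2) * ∑ i, ∑ j, αs i * αs j * gaussK n d (a i) (a j) = svmVal n d a) :
    ∀ i, 1 / 2 ≤ αs i ∧ αs i ≤ (n : ℝ) := by
  set K : Fin n → Fin n → ℝ := fun i j => gaussK n d (a i) (a j)
  have hK : ∀ i j, 0 ≤ K i j := fun _ _ => (gaussK_pos n d _ _).le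
  have hdiag : ∀ i, K i i = 1 := fun _ => gaussK_self n d _
  have hupper : ∀ j, αs j ≤ n := by
    intro j
    have hsq : αs j ^ 2 ≤ (n : ℝ) ^ 2 := by
      linarith [sq_le_sum_sum_mul_mul K hK hdiag hpos j, svmVal_le_sq_div_two a, hopt]
    exact (abs_le_of_sq_le_sq' hsq (Nat.cast_nonneg n)).2
  have hoff : ∀ i j, i ≠ j → K i j ≤ ((n : ℝ) ^ 100)⁻¹ := fun i j hij =>
    gaussK_le_inv_pow_of_one_le (by omega)
      (one_le_sum_sq_sub_of_ne (ha01 i) (ha01 j) (hainj.ne hij))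
  intro i
  have hmargin := one_le_add_of_one_le_sum_mul K hK hdiag hpos hupper hoff i (hfeas i)
  rw [Fintype.card_fin] at hmargin
  have hsmall := sub_one_mul_mul_inv_pow_le_half (x := (n : ℝ)) (by exact_mod_cast hn)
  exact ⟨by linarith, hupper i⟩
end

section
/- Let d ≥ 1, let a_1,…,a_n, b_1,…,b_n ∈ {0,1}^d, let t ≥ 1 be an integer, and let C > 0. Define s = Σ_{i,j=1}^n exp(−C·Hamming(a_i,b_j)). Then: (a) if Hamming(a_i,b_j) ≥ t for all i,j, then s ≤ n²·exp(−C·t); (b) if there exist i,j with Hamming(a_i,b_j) ≤ t−1, then s ≥ exp(−C·(t−1)); and (c) if C = 100 ln n and n ≥ 2, then exp(−C·(t−1)) > 2·n²·exp(−C·t), so the values of s in cases (a) and (b) are separated. -/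
set_option maxHeartbeats 1000000


open Finset

/-- Separation of the kernel cross-sum `s = Σ_{i,j} exp(−C·Hamming(a_i,b_j))`:
(a) if all pairs are at Hamming distance at least `t`, then `s ≤ n² exp(−Ct)`;
(b) if some pair is at Hamming distance at most `t−1`, then `s ≥ exp(−C(t−1))`;
(c) for `C = 100 ln n` and `n ≥ 2`, `exp(−C(t−1)) > 2 n² exp(−Ct)`. -/
theorem kernel_sum_separation (n d : ℕ) (hd : 1 ≤ d)
    (a b : Fin n → Fin d → ℝ)
    (ha01 : ∀ i l, a i l = 0 ∨ a i l = 1)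
    (hb01 : ∀ i l, b i l = 0 ∨ b i l = 1)
    (t : ℕ) (ht : 1 ≤ t) (C : ℝ) (hC : 0 < C) :
    ((∀ i j, (t : ℝ) ≤ ∑ l, (a i l - b j l) ^ 2) →
        ∑ i, ∑ j, Real.exp (-C * ∑ l, (a i l - b j l) ^ 2)
          ≤ (n : ℝ) ^ 2 * Real.exp (-C * t)) ∧
    ((∃ i j, ∑ l, (a i l - b j l) ^ 2 ≤ (t : ℝ) - 1) →
        Real.exp (-C * ((t : ℝ) - 1))
          ≤ ∑ i, ∑ j, Real.exp (-C * ∑ l, (a i l - b j l) ^ 2)) ∧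
    (C = 100 * Real.log n → 2 ≤ n →
        2 * (n : ℝ) ^ 2 * Real.exp (-C * t) < Real.exp (-C * ((t : ℝ) - 1))) := by
  refine ⟨?_, ?_, ?_⟩
  · intro h
    calc ∑ i, ∑ j, Real.exp (-C * ∑ l, (a i l - b j l) ^ 2)
        ≤ ∑ i : Fin n, ∑ j : Fin n, Real.exp (-C * t) := by
          refine Finset.sum_le_sum fun i _ => Finset.sum_le_sum fun j _ => ?_
          exact Real.exp_le_exp.2 (by nlinarith [h i j])
      _ = (n : ℝ) ^ 2 * Real.exp (-C * t) := by
          simp [Finset.sum_const]; ring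
  · rintro ⟨i, j, hij⟩
    have h1 : Real.exp (-C * ((t : ℝ) - 1))
        ≤ Real.exp (-C * ∑ l, (a i l - b j l) ^ 2) :=
      Real.exp_le_exp.2 (by nlinarith)
    have h2 : Real.exp (-C * ∑ l, (a i l - b j l) ^ 2)
        ≤ ∑ i, ∑ j, Real.exp (-C * ∑ l, (a i l - b j l) ^ 2) := by
      have step1 : Real.exp (-C * ∑ l, (a i l - b j l) ^ 2)
          ≤ ∑ k, Real.exp (-C * ∑ l, (a i l - b k l) ^ 2) :=
        Finset.single_le_sum
          (f := fun k => Real.exp (-C * ∑ l, (a i l - b k l) ^ 2))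
          (fun k _ => (Real.exp_pos _).le) (Finset.mem_univ j)
      have step2 : (∑ k, Real.exp (-C * ∑ l, (a i l - b k l) ^ 2))
          ≤ ∑ m, ∑ k, Real.exp (-C * ∑ l, (a m l - b k l) ^ 2) :=
        Finset.single_le_sum
          (f := fun m => ∑ k, Real.exp (-C * ∑ l, (a m l - b k l) ^ 2))
          (fun m _ => Finset.sum_nonneg fun k _ => (Real.exp_pos _).le)
          (Finset.mem_univ i)
      exact step1.trans step2
    exact h1.trans h2
  · intro hCeq hn
    have hn0 : (0:ℝ) < n := by positivity
    have hexpC : Real.exp C = (n : ℝ) ^ (100 : ℕ) := by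
      rw [hCeq, mul_comm, Real.exp_mul, Real.exp_log hn0,
        ← Real.rpow_natCast (n:ℝ) 100]
      norm_num
    have h2n : (2 : ℝ) ≤ (n : ℝ) := by exact_mod_cast hn
    have hpow : 2 * (n : ℝ) ^ 2 < (n : ℝ) ^ (100 : ℕ) := by
      have h98 : (2:ℝ) ^ 98 ≤ (n:ℝ) ^ 98 := pow_le_pow_left₀ (by norm_num) h2n 98
      have : (n:ℝ)^(100:ℕ) = (n:ℝ)^98 * (n:ℝ)^2 := by ring
      rw [this]
      have h2' : (2:ℝ) < (2:ℝ)^98 := by norm_num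
      nlinarith [sq_nonneg ((n:ℝ)), pow_pos hn0 98, sq_nonneg ((n:ℝ) - 2)]
    have key : Real.exp (-C * ((t:ℝ) - 1)) = Real.exp (-C * t) * Real.exp C := by
      rw [← Real.exp_add]; ring_nf
    rw [key, hexpC]
    have hp : 0 < Real.exp (-C * t) := Real.exp_pos _
    nlinarith
end

section
/- Let A = I + E and B = I + F be n×n real matrices with |E_{i,j}| ≤ δ and |F_{i,j}| ≤ δ for all i,j, where δ ≥ 0, and let Y ∈ ℝ^{n×n} have all entries nonnegative. Then |s(A·Y·B) − s(Y)| ≤ (2nδ + n²δ²)·s(Y), where s(X) denotes the sum of all entries of the matrix X. -/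
open Finset Matrix

/-!
Write `u k = ∑ i, (1 + E) i k = 1 + e k` for the column sums of `1 + E` and
`v l = ∑ j, (1 + F) l j = 1 + f l` for the row sums of `1 + F`, so that `|e k|, |f l| ≤ nδ`.
Expanding the product gives `s((1 + E) Y (1 + F)) = ∑ k l, u k * Y k l * v l`, hence
`s((1 + E) Y (1 + F)) - s(Y) = ∑ k l, (u k * v l - 1) * Y k l` with
`|u k * v l - 1| ≤ 2nδ + (nδ)²`, and nonnegativity of `Y` finishes the estimate.
-/

section Semiring

variable {R ι κ m n : Type*} [CommSemiring R] [Fintype ι] [Fintype n]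

theorem Matrix.sum_mul_apply (A : Matrix m ι R) (X : Matrix ι n R) (i : m) :
    ∑ j, (A * X) i j = ∑ k, A i k * ∑ j, X k j := by
  simp only [mul_apply, mul_sum]
  exact sum_comm

theorem Matrix.sum_sum_mul_apply [Fintype m] (A : Matrix m ι R) (X : Matrix ι n R) :
    ∑ i, ∑ j, (A * X) i j = ∑ k, (∑ i, A i k) * ∑ j, X k j := by
  simp only [sum_mul_apply, sum_mul]
  exact sum_comm

theorem Matrix.sum_sum_mul_mul_apply [Fintype κ] [Fintype m]
    (A : Matrix m ι R) (Y : Matrix ι κ R) (B : Matrix κ n R) :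
    ∑ i, ∑ j, (A * Y * B) i j = ∑ k, ∑ l, (∑ i, A i k) * Y k l * ∑ j, B l j := by
  rw [Matrix.mul_assoc, sum_sum_mul_apply]
  simp only [sum_mul_apply, mul_sum, mul_assoc]

end Semiring

section OrderedRing

variable {R ι κ : Type*} [CommRing R] [LinearOrder R] [IsStrictOrderedRing R]

theorem abs_sum_le_card_mul {s : Finset ι} {f : ι → R} {c : R} (h : ∀ i ∈ s, |f i| ≤ c) :
    |∑ i ∈ s, f i| ≤ #s * c :=
  (abs_sum_le_sum_abs _ _).trans <| (sum_le_card_nsmul _ _ _ h).trans_eq (nsmul_eq_mul _ _)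

theorem abs_sum_sum_mul_le [Fintype ι] [Fintype κ] {w Y : ι → κ → R} {c : R}
    (hw : ∀ k l, |w k l| ≤ c) (hY : ∀ k l, 0 ≤ Y k l) :
    |∑ k, ∑ l, w k l * Y k l| ≤ c * ∑ k, ∑ l, Y k l := by
  rw [mul_sum]
  refine (abs_sum_le_sum_abs _ _).trans <| sum_le_sum fun k _ => ?_
  rw [mul_sum]
  refine (abs_sum_le_sum_abs _ _).trans <| sum_le_sum fun l _ => ?_
  rw [abs_mul, abs_of_nonneg (hY k l)]
  exact mul_le_mul_of_nonneg_right (hw k l) (hY k l)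

theorem abs_one_add_mul_one_add_sub_one_le {a b x : R} (ha : |a| ≤ x) (hb : |b| ≤ x) :
    |(1 + a) * (1 + b) - 1| ≤ 2 * x + x ^ 2 :=
  calc |(1 + a) * (1 + b) - 1| = |a + b + a * b| := by ring_nf
    _ ≤ |a| + |b| + |a| * |b| := by grw [abs_add_le, abs_add_le, abs_mul]
    _ ≤ x + x + x * x :=
      add_le_add (add_le_add ha hb) (mul_le_mul ha hb (abs_nonneg b) ((abs_nonneg a).trans ha))
    _ = 2 * x + x ^ 2 := by ring

end OrderedRing

theorem entry_sum_almost_identity_sandwich_general (n : ℕ)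
    (E F Y : Matrix (Fin n) (Fin n) ℝ) (δ : ℝ)
    (hE : ∀ i j, |E i j| ≤ δ) (hF : ∀ i j, |F i j| ≤ δ)
    (hY : ∀ i j, 0 ≤ Y i j) :
    |(∑ i, ∑ j, ((1 + E) * Y * (1 + F)) i j) - ∑ i, ∑ j, Y i j|
      ≤ (2 * (n : ℝ) * δ + (n : ℝ) ^ 2 * δ ^ 2) * ∑ i, ∑ j, Y i j := by
  have hcol : ∀ k, |∑ i, E i k| ≤ n * δ := fun k => by
    simpa using abs_sum_le_card_mul fun i (_ : i ∈ univ) => hE i k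
  have hrow : ∀ l, |∑ j, F l j| ≤ n * δ := fun l => by
    simpa using abs_sum_le_card_mul fun j (_ : j ∈ univ) => hF l j
  have hdiff : ∑ i, ∑ j, ((1 + E) * Y * (1 + F)) i j - ∑ i, ∑ j, Y i j
      = ∑ k, ∑ l, ((1 + ∑ i, E i k) * (1 + ∑ j, F l j) - 1) * Y k l := by
    simp only [sum_sum_mul_mul_apply, Matrix.add_apply, sum_add_distrib, one_apply, sum_ite_eq,
      sum_ite_eq', mem_univ, if_true, ← sum_sub_distrib]
    exact sum_congr rfl fun k _ => sum_congr rfl fun l _ => by ring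
  rw [hdiff]
  calc _ ≤ (2 * (n * δ) + (n * δ) ^ 2) * ∑ i, ∑ j, Y i j :=
        abs_sum_sum_mul_le (fun k l => abs_one_add_mul_one_add_sub_one_le (hcol k) (hrow l)) hY
    _ = _ := by ring

/-- If `A = I + E` and `B = I + F` with all entries of `E`, `F` at most `δ`
in absolute value, and `Y` has nonnegative entries, then the entry sum of
`A·Y·B` differs from that of `Y` by at most `(2nδ + n²δ²)·s(Y)`. -/
theorem entry_sum_almost_identity_sandwich (n : ℕ)
    (E F Y : Matrix (Fin n) (Fin n) ℝ) (δ : ℝ) (hδ : 0 ≤ δ)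
    (hE : ∀ i j, |E i j| ≤ δ) (hF : ∀ i j, |F i j| ≤ δ)
    (hY : ∀ i j, 0 ≤ Y i j) :
    |(∑ i, ∑ j, ((1 + E) * Y * (1 + F)) i j) - ∑ i, ∑ j, Y i j|
      ≤ (2 * (n : ℝ) * δ + (n : ℝ) ^ 2 * δ ^ 2) * ∑ i, ∑ j, Y i j :=
  entry_sum_almost_identity_sandwich_general n E F Y δ hE hF hY
end

section
/- Let d, n, m ≥ 1, let a_1,…,a_m ∈ {0,1}^d and b_1,…,b_n ∈ {0,1}^d, let S(a,b) = max(0, 1 − 2·aᵀb) (ReLU of 1 − 2aᵀb), and let l : ℝ → ℝ be differentiable at 0. Define L : ℝ^n → ℝ by L(α) = Σ_{i=1}^m l(Σ_{j=1}^n α_j·S(a_i,b_j)). Then the sum of all entries of the gradient of L at α = 0 equals l'(0)·|{(i,j) ∈ {1,…,m}×{1,…,n} : a_iᵀ b_j = 0}|, i.e., l'(0) times the number of orthogonal pairs. In particular, for binary vectors a, b ∈ {0,1}^d one has max(0, 1 − 2aᵀb) = 1 if aᵀb = 0 and = 0 otherwise. -/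
open Finset

/-!
For binary vectors the dot product `aᵀb` is a nonnegative integer, so `1 − 2aᵀb` is `1` when
`aᵀb = 0` and at most `−1` otherwise: the ReLU unit `S(a, b)` is the indicator of orthogonality.
At `α = 0` every inner sum `Σ_j α_j S(aᵢ, b_j)` vanishes, so the chain rule gives
`∂L/∂α_j (0) = l'(0) Σ_i S(aᵢ, b_j)`, and summing over `j` counts the orthogonal pairs.
-/

section
variable {ι κ : Type*} [Fintype ι] [Fintype κ]

theorem sum_mul_eq_zero_or_one_le_of_binary {x y : κ → ℝ} (hx : ∀ p, x p = 0 ∨ x p = 1)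
    (hy : ∀ p, y p = 0 ∨ y p = 1) : ∑ p, x p * y p = 0 ∨ 1 ≤ ∑ p, x p * y p := by
  have hterm : ∀ p, x p * y p = 0 ∨ x p * y p = 1 := fun p => by
    rcases hx p with h | h <;> rcases hy p with h' | h' <;> simp [h, h']
  rw [or_iff_not_imp_left]
  intro hne
  obtain ⟨p, -, hp⟩ := exists_ne_zero_of_sum_ne_zero hne
  calc (1 : ℝ) = x p * y p := ((hterm p).resolve_left hp).symm
    _ ≤ ∑ p, x p * y p :=
      single_le_sum (f := fun q => x q * y q)
        (fun q _ => by rcases hterm q with h | h <;> rw [h]; norm_num) (mem_univ p)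

theorem max_zero_one_sub_two_mul_eq_ite {s : ℝ} (hs : s = 0 ∨ 1 ≤ s) :
    max 0 (1 - 2 * s) = if s = 0 then 1 else 0 := by
  rcases hs with rfl | hs
  · norm_num
  · rw [if_neg (by linarith), max_eq_left (by linarith)]

theorem hasFDerivAt_sum_comp_dotProduct {l : ℝ → ℝ} (hl : DifferentiableAt ℝ l 0)
    (c : ι → κ → ℝ) :
    HasFDerivAt (fun α : κ → ℝ => ∑ i, l (∑ j, α j * c i j))
      (∑ i, deriv l 0 • ∑ j, c i j • (ContinuousLinearMap.proj j : (κ → ℝ) →L[ℝ] ℝ))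
      0 := by
  refine HasFDerivAt.fun_sum fun i _ => ?_
  have hinner : HasFDerivAt (fun α : κ → ℝ => ∑ j, α j * c i j)
      (∑ j, c i j • (ContinuousLinearMap.proj j : (κ → ℝ) →L[ℝ] ℝ)) 0 :=
    HasFDerivAt.fun_sum fun j _ => (hasFDerivAt_apply j 0).mul_const (c i j)
  have houter : HasDerivAt l (deriv l 0) (∑ j, (0 : κ → ℝ) j * c i j) := by
    simpa using hl.hasDerivAt
  exact houter.comp_hasFDerivAt 0 hinner

theorem fderiv_sum_comp_dotProduct_single [DecidableEq κ] {l : ℝ → ℝ}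
    (hl : DifferentiableAt ℝ l 0) (c : ι → κ → ℝ) (j : κ) :
    fderiv ℝ (fun α : κ → ℝ => ∑ i, l (∑ j', α j' * c i j')) 0 (Pi.single j 1)
      = deriv l 0 * ∑ i, c i j := by
  rw [(hasFDerivAt_sum_comp_dotProduct hl c).fderiv]
  simp [Pi.single_apply, mul_sum]

end

theorem relu_gradient_counts_orthogonal_pairs_general (d n m : ℕ)
    (a : Fin m → Fin d → ℝ) (b : Fin n → Fin d → ℝ)
    (ha01 : ∀ i l, a i l = 0 ∨ a i l = 1)
    (hb01 : ∀ i l, b i l = 0 ∨ b i l = 1)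
    (l : ℝ → ℝ) (hl : DifferentiableAt ℝ l 0) :
    (∑ j : Fin n,
        fderiv ℝ
          (fun α : Fin n → ℝ =>
            ∑ i, l (∑ j', α j' * max 0 (1 - 2 * ∑ p, a i p * b j' p)))
          (0 : Fin n → ℝ) (Pi.single j 1))
      = deriv l 0 *
          ((Finset.univ.filter
            (fun q : Fin m × Fin n => ∑ p, a q.1 p * b q.2 p = 0)).card : ℝ) ∧
    (∀ x y : Fin d → ℝ, (∀ p, x p = 0 ∨ x p = 1) → (∀ p, y p = 0 ∨ y p = 1) →
        max 0 (1 - 2 * ∑ p, x p * y p)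
          = if (∑ p, x p * y p) = 0 then (1 : ℝ) else 0) := by
  have hrelu : ∀ x y : Fin d → ℝ, (∀ p, x p = 0 ∨ x p = 1) → (∀ p, y p = 0 ∨ y p = 1) →
      max 0 (1 - 2 * ∑ p, x p * y p) = if (∑ p, x p * y p) = 0 then (1 : ℝ) else 0 :=
    fun x y hx hy => max_zero_one_sub_two_mul_eq_ite (sum_mul_eq_zero_or_one_le_of_binary hx hy)
  refine ⟨?_, hrelu⟩
  simp only [fderiv_sum_comp_dotProduct_single hl, ← mul_sum,
    hrelu _ _ (ha01 _) (hb01 _)]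
  rw [sum_comm, ← Fintype.sum_prod_type', sum_boole]

/-- ReLU gradient reduction from Orthogonal Vectors: with
`S(a,b) = max(0, 1 − 2 aᵀb)` and `L(α) = Σ_i l(Σ_j α_j S(a_i,b_j))`, the sum of
the gradient entries of `L` at `α = 0` equals `l'(0)` times the number of
orthogonal pairs `(i,j)`; moreover for binary vectors `max(0, 1 − 2 aᵀb)` is
`1` if `aᵀb = 0` and `0` otherwise. -/
theorem relu_gradient_counts_orthogonal_pairs (d n m : ℕ)
    (hd : 1 ≤ d) (hn : 1 ≤ n) (hm : 1 ≤ m)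
    (a : Fin m → Fin d → ℝ) (b : Fin n → Fin d → ℝ)
    (ha01 : ∀ i l, a i l = 0 ∨ a i l = 1)
    (hb01 : ∀ i l, b i l = 0 ∨ b i l = 1)
    (l : ℝ → ℝ) (hl : DifferentiableAt ℝ l 0) :
    (∑ j : Fin n,
        fderiv ℝ
          (fun α : Fin n → ℝ =>
            ∑ i, l (∑ j', α j' * max 0 (1 - 2 * ∑ p, a i p * b j' p)))
          (0 : Fin n → ℝ) (Pi.single j 1))
      = deriv l 0 *
          ((Finset.univ.filter
            (fun q : Fin m × Fin n => ∑ p, a q.1 p * b q.2 p = 0)).card : ℝ) ∧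
    (∀ x y : Fin d → ℝ, (∀ p, x p = 0 ∨ x p = 1) → (∀ p, y p = 0 ∨ y p = 1) →
        max 0 (1 - 2 * ∑ p, x p * y p)
          = if (∑ p, x p * y p) = 0 then (1 : ℝ) else 0) :=
  relu_gradient_counts_orthogonal_pairs_general d n m a b ha01 hb01 l hl
end

section
/- Let n ≥ 2, d ≥ 1, and let a_1,…,a_n, b_1,…,b_n ∈ {0,1}^d. Define Q = Σ_{i,j=1}^n 1/(1 + exp(10·(ln n)·a_iᵀ b_j)). If there exists a pair (i,j) with a_iᵀ b_j = 0, then Q ≥ 1/2; if a_iᵀ b_j ≥ 1 for all i,j, then Q ≤ n^{−8}. -/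
open Finset

/-- Sigmoid gradient sum separation: for
`Q = Σ_{i,j} 1/(1 + exp(10 (ln n) a_iᵀ b_j))` over binary vectors, if some pair
is orthogonal then `Q ≥ 1/2`, and if `a_iᵀ b_j ≥ 1` for all `i,j` then
`Q ≤ n^{−8}`. -/
theorem sigmoid_gradient_separation (n d : ℕ) (hn : 2 ≤ n) (hd : 1 ≤ d)
    (a b : Fin n → Fin d → ℝ)
    (ha01 : ∀ i l, a i l = 0 ∨ a i l = 1)
    (hb01 : ∀ i l, b i l = 0 ∨ b i l = 1) :
    ((∃ i j, ∑ p, a i p * b j p = 0) →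
        (1 : ℝ) / 2 ≤
          ∑ i, ∑ j, 1 / (1 + Real.exp (10 * Real.log n * ∑ p, a i p * b j p))) ∧
    ((∀ i j, (1 : ℝ) ≤ ∑ p, a i p * b j p) →
        ∑ i, ∑ j, 1 / (1 + Real.exp (10 * Real.log n * ∑ p, a i p * b j p))
          ≤ ((n : ℝ)) ^ (-(8 : ℤ))) := by
  have hn1 : (1 : ℝ) < n := by exact_mod_cast Nat.lt_of_lt_of_le one_lt_two hn
  have hnpos : (0 : ℝ) < n := by linarith
  have hlog : 0 < Real.log n := Real.log_pos hn1
  have hpos : ∀ i j : Fin n,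
      0 < 1 + Real.exp (10 * Real.log n * ∑ p, a i p * b j p) := by
    intro i j; positivity
  constructor
  · rintro ⟨i, j, hij⟩
    have h1 : (1 : ℝ) / 2
        = 1 / (1 + Real.exp (10 * Real.log n * ∑ p, a i p * b j p)) := by
      rw [hij]; simp [Real.exp_zero]; norm_num
    rw [h1]
    have : ∀ k ∈ univ, (0:ℝ) ≤ ∑ j', 1 / (1 + Real.exp (10 * Real.log n * ∑ p, a k p * b j' p)) := by
      intro k _
      exact Finset.sum_nonneg fun j' _ => le_of_lt (by positivity)
    calc 1 / (1 + Real.exp (10 * Real.log n * ∑ p, a i p * b j p))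
        ≤ ∑ j', 1 / (1 + Real.exp (10 * Real.log n * ∑ p, a i p * b j' p)) :=
          Finset.single_le_sum (f := fun j' => 1 / (1 + Real.exp (10 * Real.log n * ∑ p, a i p * b j' p)))
            (fun j' _ => le_of_lt (by positivity)) (mem_univ j)
      _ ≤ ∑ i', ∑ j', 1 / (1 + Real.exp (10 * Real.log n * ∑ p, a i' p * b j' p)) :=
          Finset.single_le_sum (f := fun i' => ∑ j', 1 / (1 + Real.exp (10 * Real.log n * ∑ p, a i' p * b j' p)))
            this (mem_univ i)
  · intro h
    have key : ∀ i j : Fin n,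
        1 / (1 + Real.exp (10 * Real.log n * ∑ p, a i p * b j p))
          ≤ (n : ℝ) ^ (-(10 : ℤ)) := by
      intro i j
      have hs := h i j
      have h10 : (10 : ℝ) * Real.log n ≤ 10 * Real.log n * ∑ p, a i p * b j p := by
        nlinarith
      have hexp : (n : ℝ) ^ (10 : ℕ) ≤ Real.exp (10 * Real.log n * ∑ p, a i p * b j p) := by
        have hid : Real.exp (10 * Real.log n) = (n:ℝ)^(10:ℕ) := by
          rw [show (10:ℝ) = ((10:ℕ):ℝ) by norm_num, Real.exp_nat_mul, Real.exp_log hnpos]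
        rw [← hid]
        exact Real.exp_le_exp.mpr h10
      have hexp' : (n : ℝ) ^ (10 : ℕ)
          ≤ 1 + Real.exp (10 * Real.log n * ∑ p, a i p * b j p) := by
        have := Real.exp_pos (10 * Real.log n * ∑ p, a i p * b j p)
        linarith
      have hp : (0:ℝ) < (n : ℝ) ^ (10 : ℕ) := by positivity
      rw [show ((n:ℝ))^(-(10:ℤ)) = 1/((n:ℝ)^(10:ℕ)) by
        rw [zpow_neg, one_div, ← zpow_natCast (n:ℝ) 10]; norm_num]
      exact one_div_le_one_div_of_le hp hexp'
    calc ∑ i, ∑ j, 1 / (1 + Real.exp (10 * Real.log n * ∑ p, a i p * b j p))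
        ≤ ∑ _i : Fin n, ∑ _j : Fin n, (n : ℝ) ^ (-(10 : ℤ)) := by
          apply Finset.sum_le_sum; intro i _
          exact Finset.sum_le_sum fun j _ => key i j
      _ = (n : ℝ) ^ (2 : ℕ) * (n : ℝ) ^ (-(10 : ℤ)) := by
          simp [Finset.sum_const, Finset.card_univ]; ring
      _ = (n : ℝ) ^ (-(8 : ℤ)) := by
          rw [← zpow_natCast (n:ℝ) 2, ← zpow_add₀ (ne_of_gt hnpos)]; norm_num
end

section
/- Let n ≥ 1, d ≥ 1, let a_1,…,a_n, b_1,…,b_n ∈ {0,1}^d, and let 0 < ε ≤ 1. Define the matrix M_1 ∈ ℝ^{n×n} by (M_1)_{i,j} = max(0, 1 − 2·a_iᵀ b_j), and let l(x) = max(0, 1−x) be the hinge loss. Define G : ℝ^n → ℝ by G(α) = Σ_{i=1}^n l((M_1 α)_i) + Σ_{i=1}^n l(ε·α_i) + Σ_{i=1}^n l(−ε·α_i). If there exists a pair (i,j) with a_iᵀ b_j = 0, then inf_{α ∈ ℝ^n} G(α) ≤ 3n − 1. -/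
open Finset

/-- Upper bound for training the final layer (hinge loss, ReLU features):
with `(M₁)_{i,j} = max(0, 1 − 2 a_iᵀ b_j)`, hinge loss `l(x) = max(0, 1−x)`,
and `G(α) = Σ_i l((M₁α)_i) + Σ_i l(ε α_i) + Σ_i l(−ε α_i)`, if some pair
`(i,j)` is orthogonal then `inf_α G(α) ≤ 3n − 1`. -/
theorem final_layer_upper_bound (n d : ℕ) (hn : 1 ≤ n) (hd : 1 ≤ d)
    (a b : Fin n → Fin d → ℝ)
    (ha01 : ∀ i l, a i l = 0 ∨ a i l = 1)
    (hb01 : ∀ i l, b i l = 0 ∨ b i l = 1)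
    (ε : ℝ) (hε : 0 < ε) (hε1 : ε ≤ 1)
    (horth : ∃ i j, ∑ p, a i p * b j p = 0) :
    (⨅ α : Fin n → ℝ,
        ((∑ i, max 0 (1 - ∑ j, max 0 (1 - 2 * ∑ p, a i p * b j p) * α j))
          + (∑ i, max 0 (1 - ε * α i)) + ∑ i, max 0 (1 - -(ε * α i))))
      ≤ 3 * (n : ℝ) - 1 := by
  obtain ⟨i0, j0, h0⟩ := horth
  set α : Fin n → ℝ := fun j => if j = j0 then ε⁻¹ else 0 with hα
  have hεinv : (1 : ℝ) ≤ ε⁻¹ := (one_le_inv_iff₀.mpr ⟨hε, hε1⟩ : _)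
  have hbdd : BddBelow (Set.range fun α : Fin n → ℝ =>
      ((∑ i, max 0 (1 - ∑ j, max 0 (1 - 2 * ∑ p, a i p * b j p) * α j))
        + (∑ i, max 0 (1 - ε * α i)) + ∑ i, max 0 (1 - -(ε * α i)))) := by
    refine ⟨0, ?_⟩
    rintro x ⟨β, rfl⟩
    have h1 : (0:ℝ) ≤ ∑ i, max 0 (1 - ∑ j, max 0 (1 - 2 * ∑ p, a i p * b j p) * β j) :=
      Finset.sum_nonneg fun i _ => le_max_left _ _
    have h2 : (0:ℝ) ≤ ∑ i, max 0 (1 - ε * β i) :=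
      Finset.sum_nonneg fun i _ => le_max_left _ _
    have h3 : (0:ℝ) ≤ ∑ i, max 0 (1 - -(ε * β i)) :=
      Finset.sum_nonneg fun i _ => le_max_left _ _
    positivity
  have hsum_if : ∀ (k : Fin n) (c : ℝ), (∑ i, if i = k then c else 1) = (n:ℝ) + (c - 1) := by
    intro k c
    have h : ∀ i : Fin n, (if i = k then c else (1:ℝ)) = 1 + (if i = k then c - 1 else 0) := by
      intro i; by_cases h : i = k <;> simp [h]
    simp_rw [h, Finset.sum_add_distrib, Finset.sum_ite_eq' Finset.univ k]
    simp [Finset.card_univ]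
  refine ciInf_le_of_le hbdd α ?_
  -- inner sums collapse
  have hsum : ∀ i, (∑ j, max 0 (1 - 2 * ∑ p, a i p * b j p) * α j)
      = max 0 (1 - 2 * ∑ p, a i p * b j0 p) * ε⁻¹ := by
    intro i
    rw [hα]
    rw [Finset.sum_eq_single j0]
    · simp
    · intro j _ hj; simp [hj]
    · simp
  -- first sum ≤ n - 1
  have hA : (∑ i, max 0 (1 - ∑ j, max 0 (1 - 2 * ∑ p, a i p * b j p) * α j))
      ≤ (n : ℝ) - 1 := by
    have hle : ∀ i ∈ Finset.univ, max 0 (1 - ∑ j, max 0 (1 - 2 * ∑ p, a i p * b j p) * α j)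
        ≤ if i = i0 then 0 else 1 := by
      intro i _
      rw [hsum i]
      by_cases hi : i = i0
      · subst hi
        simp only [h0, if_true]
        have : (1 : ℝ) - max 0 (1 - 2 * 0) * ε⁻¹ ≤ 0 := by
          simp only [mul_zero, sub_zero, max_eq_right (by norm_num : (0:ℝ) ≤ 1), one_mul]
          linarith
        simp only [mul_zero, sub_zero] at this ⊢
        exact max_le le_rfl this
      · simp only [hi, if_false]
        have hnn : (0:ℝ) ≤ max 0 (1 - 2 * ∑ p, a i p * b j0 p) * ε⁻¹ :=
          mul_nonneg (le_max_left _ _) (by positivity)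
        exact max_le (by norm_num) (by linarith)
    calc (∑ i, max 0 (1 - ∑ j, max 0 (1 - 2 * ∑ p, a i p * b j p) * α j))
        ≤ ∑ i, (if i = i0 then (0:ℝ) else 1) := Finset.sum_le_sum hle
      _ = (n : ℝ) - 1 := by
          rw [hsum_if]; ring
  have hB : (∑ i, max 0 (1 - ε * α i)) ≤ (n : ℝ) - 1 := by
    have hle : ∀ i ∈ Finset.univ, max 0 (1 - ε * α i) ≤ if i = j0 then 0 else 1 := by
      intro i _
      rw [hα]
      by_cases hi : i = j0
      · simp [hi, mul_inv_cancel₀ hε.ne']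
      · simp [hi]
    calc (∑ i, max 0 (1 - ε * α i)) ≤ ∑ i, (if i = j0 then (0:ℝ) else 1) :=
          Finset.sum_le_sum hle
      _ = (n : ℝ) - 1 := by
          rw [hsum_if]; ring
  have hC : (∑ i, max 0 (1 - -(ε * α i))) ≤ (n : ℝ) + 1 := by
    have hle : ∀ i ∈ Finset.univ, max 0 (1 - -(ε * α i)) ≤ if i = j0 then 2 else 1 := by
      intro i _
      rw [hα]
      by_cases hi : i = j0
      · simp only [hi, if_true, mul_inv_cancel₀ hε.ne']
        norm_num
      · simp [hi]
    calc (∑ i, max 0 (1 - -(ε * α i))) ≤ ∑ i, (if i = j0 then (2:ℝ) else 1) :=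
          Finset.sum_le_sum hle
      _ = (n : ℝ) + 1 := by
          rw [hsum_if]; ring
  linarith
end

section
/- Let n ≥ 1, d ≥ 1, let a_1,…,a_n, b_1,…,b_n ∈ {0,1}^d, and let ε > 0. Define the matrix M_1 ∈ ℝ^{n×n} by (M_1)_{i,j} = max(0, 1 − 2·a_iᵀ b_j), and let l(x) = max(0, 1−x) be the hinge loss. Define G : ℝ^n → ℝ by G(α) = Σ_{i=1}^n l((M_1 α)_i) + Σ_{i=1}^n l(ε·α_i) + Σ_{i=1}^n l(−ε·α_i). If a_iᵀ b_j ≥ 1 for all pairs (i,j), then G(α) ≥ 3n for every α ∈ ℝ^n. -/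
open Finset

/-- Lower bound for training the final layer (hinge loss, ReLU features):
with `(M₁)_{i,j} = max(0, 1 − 2 a_iᵀ b_j)`, hinge loss `l(x) = max(0, 1−x)`,
and `G(α) = Σ_i l((M₁α)_i) + Σ_i l(ε α_i) + Σ_i l(−ε α_i)`, if no pair is
orthogonal (i.e. `a_iᵀ b_j ≥ 1` for all `i,j`) then `G(α) ≥ 3n` for all `α`. -/
theorem final_layer_lower_bound (n d : ℕ) (hn : 1 ≤ n) (hd : 1 ≤ d)
    (a b : Fin n → Fin d → ℝ)
    (ha01 : ∀ i l, a i l = 0 ∨ a i l = 1)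
    (hb01 : ∀ i l, b i l = 0 ∨ b i l = 1)
    (ε : ℝ) (hε : 0 < ε)
    (hno : ∀ i j, (1 : ℝ) ≤ ∑ p, a i p * b j p) :
    ∀ α : Fin n → ℝ,
      3 * (n : ℝ) ≤
        (∑ i, max 0 (1 - ∑ j, max 0 (1 - 2 * ∑ p, a i p * b j p) * α j))
          + (∑ i, max 0 (1 - ε * α i)) + ∑ i, max 0 (1 - -(ε * α i)) := by
  intro α
  have h1 : (∑ i, max 0 (1 - ∑ j, max 0 (1 - 2 * ∑ p, a i p * b j p) * α j))
      = (n : ℝ) := by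
    have : ∀ i : Fin n, (∑ j, max 0 (1 - 2 * ∑ p, a i p * b j p) * α j) = 0 := by
      intro i
      refine Finset.sum_eq_zero fun j _ => ?_
      have : max 0 (1 - 2 * ∑ p, a i p * b j p) = 0 := by
        have := hno i j; simp only [max_eq_left_iff]; linarith
      rw [this, zero_mul]
    simp [this]
  rw [h1]
  have h2 : (2 : ℝ) * n ≤ (∑ i, max 0 (1 - ε * α i)) + ∑ i, max 0 (1 - -(ε * α i)) := by
    rw [← Finset.sum_add_distrib]
    calc (2 : ℝ) * n = ∑ _i : Fin n, (2 : ℝ) := by simp [mul_comm]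
    _ ≤ _ := by
        refine Finset.sum_le_sum fun i _ => ?_
        have h1 : 1 - ε * α i ≤ max 0 (1 - ε * α i) := le_max_right _ _
        have h2 : 1 - -(ε * α i) ≤ max 0 (1 - -(ε * α i)) := le_max_right _ _
        linarith
  linarith
end
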